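/- arXiv:2311.18514 — 2 statements merged into one kernel-verified Lean document; each statement's English description precedes it below -/
import Mathlib

section
/- K = ℚ is the only totally real number field in which the primitive set 𝒫_{K/ℚ} consists of a single element; if K ≠ ℚ then 𝒫_{K/ℚ} is infinite. -/
open NumberField
open scoped Classical

/-- `K` is totally real: every complex embedding has real image. -/
def TotallyReal (K : Type) [Field K] [NumberField K] : Prop :=
  ∀ φ : K →+* ℂ, ∀ x : K, (φ x).im = 0

/-- An algebraic integer is totally positive if every real embedding sends it to a
positive real number. -/
def TPos (K : Type) [Field K] [NumberField K] (x : 𝓞 K) : Prop :=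
  ∀ φ : K →+* ℝ, 0 < φ (x : K)

/-- `γ ∈ 𝒪⁺` is primitive over `ℚ`: it is not `m • β` for any integer `m ≥ 2`
and totally positive `β`. -/
def IsPrim (K : Type) [Field K] [NumberField K] (γ : 𝓞 K) : Prop :=
  TPos K γ ∧ ∀ (m : ℕ) (β : 𝓞 K), 2 ≤ m → TPos K β → γ ≠ (m : 𝓞 K) * β

/-- A partition of `δ ∈ 𝒪⁺`: a finite multiset of totally positive integers summing to `δ`. -/
def IsPartition (K : Type) [Field K] [NumberField K] (δ : 𝓞 K) (lam : Multiset (𝓞 K)) : Prop :=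
  (∀ x ∈ lam, TPos K x) ∧ lam.sum = δ

variable (K : Type) [Field K] [NumberField K]

lemma tpos_one : TPos K 1 := fun φ => by simp

lemma isPrim_of_unit {γ : 𝓞 K} (hu : IsUnit γ) (hp : TPos K γ) : IsPrim K γ := by
  refine ⟨hp, fun m β hm hβ hL => ?_⟩
  have h1 : IsUnit ((m : ℕ) : 𝓞 K) := isUnit_of_mul_isUnit_left (hL ▸ hu)
  have h3 : ((m : ℕ) : 𝓞 K) = algebraMap ℤ (𝓞 K) (m : ℤ) := by push_cast; rfl
  rw [h3] at h1
  have h2 : IsUnit (Algebra.norm ℤ (algebraMap ℤ (𝓞 K) (m : ℤ))) :=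
    h1.map (Algebra.norm ℤ)
  rw [Algebra.norm_algebraMap_of_basis (Module.Free.chooseBasis ℤ (𝓞 K))] at h2
  rw [← Module.finrank_eq_card_chooseBasisIndex] at h2
  have hd : 0 < Module.finrank ℤ (𝓞 K) := by
    rw [RingOfIntegers.rank]; exact Module.finrank_pos
  have hmg : (1 : ℤ) < (m : ℤ) ^ Module.finrank ℤ (𝓞 K) :=
    one_lt_pow₀ (by exact_mod_cast hm) hd.ne'
  rcases Int.isUnit_iff.mp h2 with h | h
  · omega
  · have : (0:ℤ) < (m:ℤ) ^ Module.finrank ℤ (𝓞 K) := pow_pos (by positivity) _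
    omega

lemma prim_infinite (hK : TotallyReal K) (h2 : 2 ≤ Module.finrank ℚ K) :
    {x : 𝓞 K | IsPrim K x}.Infinite := by
  have hreal : ∀ φ : K →+* ℂ, ComplexEmbedding.IsReal φ := fun φ => by
    rw [ComplexEmbedding.isReal_iff]
    ext x
    rw [ComplexEmbedding.conjugate_coe_eq]
    exact Complex.conj_eq_iff_im.mpr (hK φ x)
  have hc : InfinitePlace.nrComplexPlaces K = 0 := by
    rw [Fintype.card_eq_zero_iff]
    exact ⟨fun ⟨w, hw⟩ => (InfinitePlace.isComplex_iff.mp hw) (hreal _)⟩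
  have hcard : Fintype.card (InfinitePlace K) = Module.finrank ℚ K := by
    have h := InfinitePlace.card_add_two_mul_card_eq_rank K
    rw [hc] at h
    rw [InfinitePlace.card_eq_nrRealPlaces_add_nrComplexPlaces, hc]
    omega
  have hrank : 0 < Units.rank K := by rw [Units.rank]; omega
  have hnt : Nontrivial (Units.unitLattice K) := by
    apply Module.nontrivial_of_finrank_pos (R := ℤ)
    rw [Units.unitLattice_rank]; exact hrank
  obtain ⟨x, hx⟩ := exists_ne (0 : Units.unitLattice K)
  obtain ⟨u, -, hu⟩ := x.2
  set v : (𝓞 K)ˣ := Additive.toMul u with hv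
  have hu' : Units.logEmbedding K u = (x : _) := hu
  have hlog : Units.logEmbedding K (Additive.ofMul v) ≠ 0 := by
    intro h
    exact hx (Subtype.ext (by rw [← hu']; exact h))
  have hvt : v ∉ Units.torsion K := fun h =>
    hlog (Units.dirichletUnitTheorem.logEmbedding_eq_zero_iff.mpr h)
  have hvf : ¬IsOfFinOrder v := fun h => hvt (CommGroup.mem_torsion _ |>.mpr h)
  have hinj : Function.Injective (fun n : ℕ => v ^ n) :=
    injective_pow_iff_not_isOfFinOrder.mpr hvf
  refine Set.infinite_of_injective_forall_mem
    (f := fun n : ℕ => ((v : 𝓞 K)) ^ (2 * n + 2)) ?_ ?_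
  · intro a b hab
    simp only at hab
    have he : v ^ (2 * a + 2) = v ^ (2 * b + 2) :=
      Units.ext (by simpa [Units.val_pow_eq_pow_val] using hab)
    have := hinj he
    omega
  · intro n
    refine isPrim_of_unit K (v.isUnit.pow _) ?_
    intro φ
    have hne : φ ((v : 𝓞 K) : K) ≠ 0 := by
      simp only [ne_eq, map_eq_zero, RingOfIntegers.coe_eq_zero_iff]
      exact v.isUnit.ne_zero
    have hcast : ((((v : 𝓞 K) ^ (2 * n + 2) : 𝓞 K)) : K)
        = (((v : 𝓞 K) : K)) ^ (2 * n + 2) := by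
      push_cast; ring
    rw [hcast, map_pow, show 2 * n + 2 = (n + 1) * 2 by ring, pow_mul]
    exact pow_two_pos_of_ne_zero (pow_ne_zero _ hne)

lemma prim_eq_one_of_rank_one (hK : TotallyReal K) (h1 : Module.finrank ℚ K = 1) :
    {x : 𝓞 K | IsPrim K x} = {1} := by
  obtain ⟨φ⟩ : Nonempty (K →+* ℂ) := inferInstance
  let ψ : K →+* ℝ :=
    { toFun := fun x => (φ x).re
      map_one' := by simp
      map_mul' := fun x y => by
        have hx := hK φ x
        simp [Complex.mul_re, hx]
      map_zero' := by simp
      map_add' := fun x y => by simp }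
  have hint : ∀ x : 𝓞 K, ∃ n : ℤ, x = (n : 𝓞 K) := by
    intro x
    obtain ⟨q, hq⟩ := (finrank_eq_one_iff_of_nonzero' (1 : K) one_ne_zero).mp h1 (x : K)
    have hq' : algebraMap ℚ K q = (x : K) := by
      rw [← hq, Algebra.smul_def, mul_one]
    have hintq : IsIntegral ℤ q := by
      rw [← isIntegral_algebraMap_iff (algebraMap ℚ K).injective, hq']
      exact x.isIntegral_coe
    obtain ⟨n, hn⟩ := IsIntegrallyClosed.isIntegral_iff.mp hintq
    refine ⟨n, RingOfIntegers.coe_injective ?_⟩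
    show (x : K) = (((n : ℤ) : 𝓞 K) : K)
    rw [← hq', ← hn, show (((n : ℤ) : 𝓞 K) : K) = ((n : ℤ) : K) by exact_mod_cast rfl]
    simp
  ext x
  simp only [Set.mem_setOf_eq, Set.mem_singleton_iff]
  constructor
  · rintro ⟨hp, hnp⟩
    obtain ⟨n, rfl⟩ := hint x
    have hpos : (0 : ℝ) < (n : ℝ) := by
      have := hp ψ
      rwa [show (((n : ℤ) : 𝓞 K) : K) = ((n : ℤ) : K) by exact_mod_cast rfl,
        map_intCast] at this
    have hn1 : 1 ≤ n := by exact_mod_cast hpos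
    by_contra hne
    have hn2 : 2 ≤ n := by
      rcases lt_or_eq_of_le hn1 with h | h
      · omega
      · exact absurd (by rw [← h]; push_cast; ring) hne
    refine hnp n.toNat 1 (by omega) (tpos_one K) ?_
    rw [mul_one]
    have htn : ((n.toNat : ℕ) : ℤ) = n := Int.toNat_of_nonneg (by omega)
    exact_mod_cast htn.symm
  · rintro rfl
    exact isPrim_of_unit K isUnit_one (tpos_one K)

theorem primitive_set_singleton_iff_rat (hK : TotallyReal K) :
    ((∃ γ : 𝓞 K, {x : 𝓞 K | IsPrim K x} = {γ}) ↔ Module.finrank ℚ K = 1) ∧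
      (Module.finrank ℚ K ≠ 1 → {x : 𝓞 K | IsPrim K x}.Infinite) := by
  have hinf : Module.finrank ℚ K ≠ 1 → {x : 𝓞 K | IsPrim K x}.Infinite := by
    intro h
    have hpos : 0 < Module.finrank ℚ K := Module.finrank_pos
    exact prim_infinite K hK (by omega)
  refine ⟨⟨fun ⟨γ, hγ⟩ => ?_, fun h => ⟨1, prim_eq_one_of_rank_one K hK h⟩⟩, hinf⟩
  by_contra h
  exact (hinf h) (hγ ▸ Set.finite_singleton γ)
end

section
/- For a primitive partition λ = (γ₁^{n₁} γ₂^{n₂} ⋯ γ_l^{n_l}) of δ ∈ 𝒪⁺ (with γ₁,…,γ_l distinct primitives), the number of partitions of δ whose primitive sectional refinement is λ equals the product p(n₁)p(n₂)⋯p(n_l) of ordinary partition numbers. -/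
open NumberField
open scoped Classical

variable (K : Type) [Field K] [NumberField K]

/-- `mu` is a sectional refinement of `lam`: `mu` is obtained by concatenating, for each
part `p` of `lam`, a partition of `p` all of whose parts lie in the section `t(p)ℤ⁺`
of the primitive factor of `p`. -/
def IsSecRef (K : Type) [Field K] [NumberField K] (mu lam : Multiset (𝓞 K)) : Prop :=
  ∃ m : Multiset ((𝓞 K) × Multiset (𝓞 K)),
    m.map Prod.fst = lam ∧ (m.map Prod.snd).sum = mu ∧
      ∀ p ∈ m, p.2.sum = p.1 ∧
        ∃ γ : 𝓞 K, IsPrim K γ ∧ (∃ k : ℕ, 0 < k ∧ p.1 = (k : 𝓞 K) * γ) ∧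
          ∀ x ∈ p.2, ∃ k : ℕ, 0 < k ∧ x = (k : 𝓞 K) * γ

section AuxLemmas
variable {K}

lemma existsRealEmb (hK : TotallyReal K) : Nonempty (K →+* ℝ) := by
  obtain ⟨φ⟩ := (inferInstance : Nonempty (K →+* ℂ))
  refine ⟨NumberField.ComplexEmbedding.IsReal.embedding (φ := φ) ?_⟩
  rw [NumberField.ComplexEmbedding.isReal_iff]
  ext x
  exact Complex.conj_eq_iff_im.mpr (hK φ x)

lemma tpos_ne_zero (hK : TotallyReal K) {x : 𝓞 K} (hx : TPos K x) : x ≠ 0 := by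
  obtain ⟨ψ⟩ := existsRealEmb hK
  intro h
  have := hx ψ
  rw [h] at this
  simp at this

lemma tpos_nat_mul {k : ℕ} (hk : 0 < k) {γ : 𝓞 K} (hγ : TPos K γ) :
    TPos K ((k : 𝓞 K) * γ) := by
  intro φ
  have h1 : (((k : 𝓞 K) * γ : 𝓞 K) : K) = (k : K) * (γ : K) := by push_cast; ring
  rw [h1, map_mul, map_natCast]
  have := hγ φ
  positivity

lemma cast_mul_cancel {γ : 𝓞 K} (hγ : γ ≠ 0) {k k' : ℕ}
    (h : (k : 𝓞 K) * γ = (k' : 𝓞 K) * γ) : k = k' := by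
  have := mul_right_cancel₀ hγ h
  exact_mod_cast this

lemma prim_unique (hK : TotallyReal K) {γ γ' : 𝓞 K} (hγ : IsPrim K γ) (hγ' : IsPrim K γ')
    {k k' : ℕ} (hk : 0 < k) (hk' : 0 < k')
    (h : (k : 𝓞 K) * γ = (k' : 𝓞 K) * γ') : k = k' ∧ γ = γ' := by
  set d := Nat.gcd k k' with hd
  have hdpos : 0 < d := Nat.gcd_pos_of_pos_left _ hk
  set a := k / d with ha
  set b := k' / d with hb
  have hka : k = a * d := (Nat.div_mul_cancel (Nat.gcd_dvd_left k k')).symm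
  have hkb : k' = b * d := (Nat.div_mul_cancel (Nat.gcd_dvd_right k k')).symm
  have hapos : 0 < a := Nat.div_pos (Nat.le_of_dvd hk (Nat.gcd_dvd_left k k')) hdpos
  have hbpos : 0 < b := Nat.div_pos (Nat.le_of_dvd hk' (Nat.gcd_dvd_right k k')) hdpos
  have hcop : Nat.Coprime a b := Nat.coprime_div_gcd_div_gcd hdpos
  clear_value d a b
  have h2 : (a : 𝓞 K) * γ = (b : 𝓞 K) * γ' := by
    have hd0 : (d : 𝓞 K) ≠ 0 := by exact_mod_cast hdpos.ne'
    apply mul_left_cancel₀ hd0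
    have := h
    rw [hka, hkb] at this
    push_cast at this
    linear_combination this
  have hcopZ : IsCoprime (a : ℤ) (b : ℤ) := by
    rw [Int.isCoprime_iff_gcd_eq_one]
    exact_mod_cast hcop
  obtain ⟨u, v, huv⟩ := hcopZ
  set β : 𝓞 K := (u : 𝓞 K) * γ' + (v : 𝓞 K) * γ with hβ
  have hclaim : γ = (b : 𝓞 K) * β := by
    have e : (b : 𝓞 K) * β = ((u * (a:ℤ) + v * (b:ℤ) : ℤ) : 𝓞 K) * γ := by
      rw [hβ]; push_cast
      linear_combination (-(u : 𝓞 K)) * h2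
    rw [e, huv]; push_cast; ring
  have hβpos : TPos K β := by
    intro φ
    have h1 : ((b : ℝ)) * φ (β : K) = φ (γ : K) := by
      rw [hclaim]
      have : (((b : 𝓞 K) * β : 𝓞 K) : K) = (b : K) * (β : K) := by push_cast; ring
      rw [this, map_mul, map_natCast]
    have h3 := hγ.1 φ
    nlinarith [hγ.1 φ, (by exact_mod_cast hbpos : (0:ℝ) < (b:ℝ))]
  have hb1 : b = 1 := by
    by_contra hb2
    exact hγ.2 b β (by omega) hβpos hclaim
  have h3 : γ' = (a : 𝓞 K) * γ := by
    rw [h2, hb1, Nat.cast_one, one_mul]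
  have ha1 : a = 1 := by
    by_contra ha2
    exact hγ'.2 a γ (by omega) hγ.1 h3
  constructor
  · rw [hka, hkb, ha1, hb1]
  · rw [h3, ha1, Nat.cast_one, one_mul]

lemma filter_finset_sum {α β : Type} (s : Finset α) (M : α → Multiset β) (P : β → Prop)
    [DecidablePred P] :
    (∑ a ∈ s, M a).filter P = ∑ a ∈ s, (M a).filter P := by
  classical
  induction s using Finset.induction with
  | empty => simp
  | insert _ _ h ih => simp [Finset.sum_insert h, Multiset.filter_add, ih]

lemma multiset_map_finset_sum {α β γ : Type} (s : Finset α) (M : α → Multiset β) (g : β → γ) :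
    (∑ a ∈ s, M a).map g = ∑ a ∈ s, (M a).map g := by
  classical
  induction s using Finset.induction with
  | empty => simp
  | insert _ _ h ih => simp [Finset.sum_insert h, ih]

lemma sum_finset_sum {α β : Type} [AddCommMonoid β] (s : Finset α) (M : α → Multiset β) :
    (∑ a ∈ s, M a).sum = ∑ a ∈ s, (M a).sum := by
  classical
  induction s using Finset.induction with
  | empty => simp
  | insert _ _ h ih => simp [Finset.sum_insert h, ih]

lemma natCastSum {R : Type} [Semiring R] (s : Multiset ℕ) :
    (s.map (Nat.cast : ℕ → R)).sum = (s.sum : R) := by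
  induction s using Multiset.induction with
  | empty => simp
  | cons a s ih => rw [Multiset.map_cons, Multiset.sum_cons, Multiset.sum_cons, ih, Nat.cast_add]

lemma sum_map_replicate {α : Type} (parts : Multiset ℕ) (γ : α) :
    ((parts.map (fun k => Multiset.replicate k γ)).sum) = Multiset.replicate parts.sum γ := by
  induction parts using Multiset.induction with
  | empty => simp
  | cons a s ih => simp [ih, Multiset.replicate_add]

lemma sum_map_filter_eq {α : Type} (m : Multiset α) (pred : α → Prop) [DecidablePred pred]
    (f : α → ℕ) :
    ((m.filter pred).map f).sum = (m.map (fun a => if pred a then f a else 0)).sum := by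
  induction m using Multiset.induction with
  | empty => simp
  | cons a s ih =>
    by_cases h : pred a <;> simp [Multiset.filter_cons, h, ih]

end AuxLemmas

theorem card_partitions_with_given_primitive_refinement
    (hK : TotallyReal K) (δ : 𝓞 K) (hδ : TPos K δ)
    (mu : Multiset (𝓞 K)) (hmu : ∀ x ∈ mu, IsPrim K x) (hsum : mu.sum = δ) :
    {lam : Multiset (𝓞 K) | IsPartition K δ lam ∧ IsSecRef K mu lam}.ncard
      = ∏ γ ∈ mu.toFinset, Fintype.card (Nat.Partition (mu.count γ)) := by
  classical
  set P : 𝓞 K → 𝓞 K → Prop := fun γ x => ∃ k : ℕ, 0 < k ∧ x = (k : 𝓞 K) * γ with hP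
  set G : (∀ γ : {x // x ∈ mu.toFinset}, Nat.Partition (mu.count ↑γ)) → Multiset (𝓞 K) :=
    fun f => ∑ γ ∈ mu.toFinset.attach, ((f γ).parts.map (fun k : ℕ => (k : 𝓞 K) * (↑γ : 𝓞 K))) with hG
  have hprim : ∀ γ : 𝓞 K, γ ∈ mu.toFinset → IsPrim K γ :=
    fun γ hγ => hmu γ (Multiset.mem_toFinset.mp hγ)
  have hne : ∀ γ : 𝓞 K, γ ∈ mu.toFinset → γ ≠ 0 :=
    fun γ hγ => tpos_ne_zero hK (hprim γ hγ).1
  -- fiber extraction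
  have hfiber : ∀ f, ∀ γ₀, ∀ h₀ : γ₀ ∈ mu.toFinset,
      (G f).filter (P γ₀) = (f ⟨γ₀, h₀⟩).parts.map (fun k : ℕ => (k : 𝓞 K) * γ₀) := by
    intro f γ₀ h₀
    simp only [hG]
    rw [filter_finset_sum]
    rw [Finset.sum_eq_single_of_mem ⟨γ₀, h₀⟩ (Finset.mem_attach _ _)]
    · rw [Multiset.filter_eq_self.mpr]
      intro x hx
      obtain ⟨k, hk, rfl⟩ := Multiset.mem_map.mp hx
      exact ⟨k, (f _).parts_pos hk, rfl⟩
    · intro γ _ hne'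
      rw [Multiset.filter_eq_nil.mpr]
      intro x hx hPx
      obtain ⟨k, hk, rfl⟩ := Multiset.mem_map.mp hx
      obtain ⟨k', hk', hx'⟩ := hPx
      have := prim_unique hK (hprim ↑γ γ.2) (hprim γ₀ h₀) ((f γ).parts_pos hk) hk' hx'
      exact hne' (Subtype.ext this.2)
  have hGinj : Function.Injective G := by
    intro f f' hff
    funext γ
    apply Nat.Partition.ext
    have h1 := hfiber f ↑γ γ.2
    have h2 := hfiber f' ↑γ γ.2
    rw [hff] at h1
    have hinj : Function.Injective (fun k : ℕ => (k : 𝓞 K) * (↑γ : 𝓞 K)) := by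
      intro a b hab
      exact cast_mul_cancel (hne ↑γ γ.2) hab
    have := Multiset.map_injective hinj (h1.symm.trans h2)
    exact this
  -- range G ⊆ S
  have hGmem : ∀ f, IsPartition K δ (G f) ∧ IsSecRef K mu (G f) := by
    intro f
    refine ⟨⟨?_, ?_⟩, ?_⟩
    · intro x hx
      simp only [hG] at hx
      obtain ⟨γ, -, hxγ⟩ := Multiset.mem_sum.mp hx
      obtain ⟨k, hk, rfl⟩ := Multiset.mem_map.mp hxγ
      exact tpos_nat_mul ((f γ).parts_pos hk) (hprim ↑γ γ.2).1
    · -- sum = δ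
      simp only [hG]
      rw [sum_finset_sum, ← hsum]
      have hterm : ∀ γ : {x // x ∈ mu.toFinset},
          ((f γ).parts.map (fun k : ℕ => (k : 𝓞 K) * (↑γ : 𝓞 K))).sum = (mu.count ↑γ : 𝓞 K) * ↑γ := by
        intro γ
        rw [Multiset.sum_map_mul_right]
        congr 1
        rw [natCastSum, (f γ).parts_sum]
      rw [Finset.sum_congr rfl (fun γ _ => hterm γ)]
      rw [Finset.sum_attach mu.toFinset (fun γ => (mu.count γ : 𝓞 K) * γ)]
      conv_rhs => rw [← Multiset.map_id mu]
      rw [Finset.sum_multiset_map_count]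
      simp [nsmul_eq_mul]
    · -- IsSecRef
      refine ⟨∑ γ ∈ mu.toFinset.attach,
          ((f γ).parts.map (fun k : ℕ => ((k : 𝓞 K) * (↑γ : 𝓞 K), Multiset.replicate k (↑γ : 𝓞 K)))),
          ?_, ?_, ?_⟩
      · rw [multiset_map_finset_sum]
        simp only [hG, Multiset.map_map, Function.comp]
      · rw [multiset_map_finset_sum]
        simp only [Multiset.map_map, Function.comp]
        rw [sum_finset_sum]
        have hterm : ∀ γ : {x // x ∈ mu.toFinset},
            ((f γ).parts.map (fun k : ℕ => Multiset.replicate k (↑γ : 𝓞 K))).sum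
              = Multiset.replicate (mu.count ↑γ) ↑γ := by
          intro γ
          rw [sum_map_replicate, (f γ).parts_sum]
        rw [Finset.sum_congr rfl (fun γ _ => hterm γ)]
        rw [Finset.sum_attach mu.toFinset (fun γ => Multiset.replicate (mu.count γ) γ)]
        simp only [← Multiset.nsmul_singleton]
        exact Multiset.toFinset_sum_count_nsmul_eq mu
      · intro p hp
        obtain ⟨γ, -, hpγ⟩ := Multiset.mem_sum.mp hp
        obtain ⟨k, hk, rfl⟩ := Multiset.mem_map.mp hpγ
        refine ⟨?_, ↑γ, hprim ↑γ γ.2, ⟨k, (f γ).parts_pos hk, rfl⟩, ?_⟩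
        · simp [Multiset.sum_replicate, nsmul_eq_mul]
        · intro x hx
          exact ⟨1, one_pos, by simp [Multiset.eq_of_mem_replicate hx]⟩
  -- S ⊆ range G
  have hSsub : ∀ lam, IsPartition K δ lam → IsSecRef K mu lam → lam ∈ Set.range G := by
    rintro lam ⟨hTP, hlsum⟩ ⟨m, hm1, hm2, hm3⟩
    have hA : ∀ p ∈ m, ∃ γ : 𝓞 K, γ ∈ mu.toFinset ∧ 0 < Multiset.card p.2 ∧
        p.1 = (Multiset.card p.2 : 𝓞 K) * γ ∧ p.2 = Multiset.replicate (Multiset.card p.2) γ := by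
      intro p hp
      obtain ⟨hps, γ, hγ, ⟨k, hk, hpk⟩, hall⟩ := hm3 p hp
      have hsub : p.2 ≤ mu := by
        rw [← hm2]
        exact Multiset.le_sum_of_mem (Multiset.mem_map_of_mem _ hp)
      have hmem : ∀ x ∈ p.2, x ∈ mu := fun x hx => Multiset.mem_of_le hsub hx
      have hallγ : ∀ x ∈ p.2, x = γ := by
        intro x hx
        obtain ⟨j, hj, hxj⟩ := hall x hx
        exact (prim_unique hK (hmu x (hmem x hx)) hγ one_pos hj
          (by rw [Nat.cast_one, one_mul]; exact hxj)).2
      have hrep : p.2 = Multiset.replicate (Multiset.card p.2) γ :=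
        Multiset.eq_replicate_card.mpr hallγ
      have hs2 : p.2.sum = (Multiset.card p.2 : 𝓞 K) * γ := by
        conv_lhs => rw [hrep]
        rw [Multiset.sum_replicate, nsmul_eq_mul]
      have hcard : Multiset.card p.2 = k :=
        cast_mul_cancel (tpos_ne_zero hK hγ.1) (by rw [← hs2, hps, hpk])
      have hcpos : 0 < Multiset.card p.2 := by omega
      have hγmem : γ ∈ mu.toFinset := by
        rw [Multiset.mem_toFinset]
        apply hmem
        rw [hrep]
        exact Multiset.mem_replicate.mpr ⟨by omega, rfl⟩
      exact ⟨γ, hγmem, hcpos, by rw [hpk, hcard], hrep⟩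
    refine ⟨fun γ => ⟨(m.filter (fun p => (↑γ : 𝓞 K) ∈ p.2)).map (fun p => Multiset.card p.2),
      ?_, ?_⟩, ?_⟩
    · intro i hi
      obtain ⟨p, hp, rfl⟩ := Multiset.mem_map.mp hi
      obtain ⟨γ', -, hpos, -, -⟩ := hA p (Multiset.mem_of_mem_filter hp)
      exact hpos
    · -- sum of parts = count
      rw [sum_map_filter_eq]
      have h1 : ∀ γ0 : 𝓞 K, mu.count γ0 = (m.map (fun p => p.2.count γ0)).sum := by
        intro γ0
        conv_lhs => rw [← hm2]
        rw [Multiset.count_sum]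
      refine Eq.trans ?_ (h1 ↑γ).symm
      apply congrArg Multiset.sum
      apply Multiset.map_congr rfl
      intro p hp
      obtain ⟨γ', -, hpos, -, hp2⟩ := hA p hp
      by_cases hmemγ : (↑γ : 𝓞 K) ∈ p.2
      · have hgg : γ' = ↑γ := by
          rw [hp2] at hmemγ
          exact (Multiset.eq_of_mem_replicate hmemγ).symm
        rw [if_pos hmemγ]
        conv_rhs => rw [hp2]
        rw [Multiset.count_replicate, if_pos hgg]
      · rw [if_neg hmemγ, Multiset.count_eq_zero.mpr hmemγ]
    · -- G f = lam
      simp only [hG]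
      have hterm : ∀ γ : {x // x ∈ mu.toFinset},
          (((m.filter (fun p => (↑γ : 𝓞 K) ∈ p.2)).map (fun p => Multiset.card p.2)).map
              (fun k : ℕ => (k : 𝓞 K) * (↑γ : 𝓞 K)))
            = (m.filter (fun p => (↑γ : 𝓞 K) ∈ p.2)).map Prod.fst := by
        intro γ
        rw [Multiset.map_map]
        apply Multiset.map_congr rfl
        intro p hp
        obtain ⟨γ', -, -, hp1, hp2⟩ := hA p (Multiset.mem_of_mem_filter hp)
        have hmemγ := (Multiset.mem_filter.mp hp).2
        have hgg : γ' = ↑γ := by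
          rw [hp2] at hmemγ
          exact (Multiset.eq_of_mem_replicate hmemγ).symm
        simp only [Function.comp_apply]
        rw [hp1, hgg]
      rw [Finset.sum_congr rfl (fun γ _ => hterm γ)]
      have hfilters : ∑ γ ∈ mu.toFinset.attach,
          m.filter (fun p => (↑γ : 𝓞 K) ∈ p.2) = m := by
        rw [Finset.sum_attach mu.toFinset (fun γ₀ => m.filter (fun p => γ₀ ∈ p.2))]
        ext p
        rw [Multiset.count_sum']
        by_cases hp : p ∈ m
        · obtain ⟨γ', hγ't, hpos, -, hp2⟩ := hA p hp
          rw [Finset.sum_eq_single_of_mem γ' hγ't]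
          · rw [Multiset.count_filter, if_pos]
            rw [hp2]
            exact Multiset.mem_replicate.mpr ⟨by omega, rfl⟩
          · intro g2 hg2 hne2
            rw [Multiset.count_filter, if_neg]
            intro hmem2
            rw [hp2] at hmem2
            exact hne2 (Multiset.eq_of_mem_replicate hmem2)
        · have h0 : m.count p = 0 := Multiset.count_eq_zero.mpr hp
          rw [h0]
          apply Finset.sum_eq_zero
          intro g2 hg2
          rw [Multiset.count_filter]
          split <;> simp [h0]
      rw [← multiset_map_finset_sum, hfilters, hm1]
  have hrange : {lam : Multiset (𝓞 K) | IsPartition K δ lam ∧ IsSecRef K mu lam}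
      = Set.range G := by
    ext lam
    constructor
    · rintro ⟨h1, h2⟩
      exact hSsub lam h1 h2
    · rintro ⟨f, rfl⟩
      exact hGmem f
  rw [hrange, ← Nat.card_coe_set_eq, Nat.card_range_of_injective hGinj,
    Nat.card_eq_fintype_card, Fintype.card_pi]
  exact Finset.prod_coe_sort mu.toFinset (fun γ => Fintype.card (Nat.Partition (mu.count γ)))
end
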